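/- arXiv:2006.08646 — 3 statements merged into one kernel-verified Lean document; each statement's English description precedes it below -/
import Mathlib

section
/- Let a,b,c,d,e,f in Z/3Z be the height values of the six plaquettes surrounding a hexagonal plaquette, listed cyclically. There exists x in Z/3Z such that no two cyclically consecutive boundary values together with x are all three equal (i.e., for no i are h_i = h_{i+1} = x), if and only if the boundary configuration is not, up to cyclic rotation, of the form (a,a,b,b,c,c) with a,b,c pairwise distinct. -/
set_option maxRecDepth 100000

/-- Equality pattern of a staggered configuration rotated by `k`. -/
abbrev hexPat (h : Fin 6 → ZMod 3) (k : Fin 6) : Prop :=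
  h (0+k) = h (1+k) ∧ h (2+k) = h (3+k) ∧ h (4+k) = h (5+k) ∧
  h (0+k) ≠ h (2+k) ∧ h (2+k) ≠ h (4+k) ∧ h (0+k) ≠ h (4+k)

private lemma hexPat_iff (h : Fin 6 → ZMod 3) (k : Fin 6) :
    (∃ a b c : ZMod 3, a ≠ b ∧ b ≠ c ∧ a ≠ c ∧
        ∀ i : Fin 6, h (i + k) = ![a, a, b, b, c, c] i) ↔ hexPat h k := by
  constructor
  · rintro ⟨a, b, c, hab, hbc, hac, H⟩
    have H0 : h (0 + k) = a := H 0
    have H1 : h (1 + k) = a := H 1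
    have H2 : h (2 + k) = b := H 2
    have H3 : h (3 + k) = b := H 3
    have H4 : h (4 + k) = c := H 4
    have H5 : h (5 + k) = c := H 5
    refine ⟨H0.trans H1.symm, H2.trans H3.symm, H4.trans H5.symm, ?_, ?_, ?_⟩
    · rw [H0, H2]; exact hab
    · rw [H2, H4]; exact hbc
    · rw [H0, H4]; exact hac
  · rintro ⟨e01, e23, e45, n02, n24, n04⟩
    refine ⟨h (0+k), h (2+k), h (4+k), n02, n24, n04, ?_⟩
    intro i
    fin_cases i
    · rfl
    · exact e01.symm
    · rfl
    · exact e23.symm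
    · rfl
    · exact e45.symm

private lemma hexRot_iff (h : Fin 6 → ZMod 3) :
    (∃ (k : Fin 6) (a b c : ZMod 3), a ≠ b ∧ b ≠ c ∧ a ≠ c ∧
        ∀ i : Fin 6, h (i + k) = ![a, a, b, b, c, c] i) ↔
      (hexPat h 0 ∨ hexPat h 1 ∨ hexPat h 2 ∨ hexPat h 3 ∨ hexPat h 4 ∨ hexPat h 5) := by
  constructor
  · rintro ⟨k, hk⟩
    replace hk := (hexPat_iff h k).mp hk
    fin_cases k
    · exact Or.inl hk
    · exact Or.inr (Or.inl hk)
    · exact Or.inr (Or.inr (Or.inl hk))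
    · exact Or.inr (Or.inr (Or.inr (Or.inl hk)))
    · exact Or.inr (Or.inr (Or.inr (Or.inr (Or.inl hk))))
    · exact Or.inr (Or.inr (Or.inr (Or.inr (Or.inr hk))))
  · rintro (hp | hp | hp | hp | hp | hp)
    · exact ⟨0, (hexPat_iff h 0).mpr hp⟩
    · exact ⟨1, (hexPat_iff h 1).mpr hp⟩
    · exact ⟨2, (hexPat_iff h 2).mpr hp⟩
    · exact ⟨3, (hexPat_iff h 3).mpr hp⟩
    · exact ⟨4, (hexPat_iff h 4).mpr hp⟩
    · exact ⟨5, (hexPat_iff h 5).mpr hp⟩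

private lemma hex_aux : ∀ a b c d e f : ZMod 3,
    ((∃ x : ZMod 3, ∀ i : Fin 6,
        ¬ (![a,b,c,d,e,f] i = ![a,b,c,d,e,f] (i + 1) ∧ ![a,b,c,d,e,f] i = x)) ↔
      ¬ (hexPat ![a,b,c,d,e,f] 0 ∨ hexPat ![a,b,c,d,e,f] 1 ∨ hexPat ![a,b,c,d,e,f] 2 ∨
         hexPat ![a,b,c,d,e,f] 3 ∨ hexPat ![a,b,c,d,e,f] 4 ∨ hexPat ![a,b,c,d,e,f] 5)) := by
  decide +kernel

/-- Around a hexagonal plaquette with cyclic boundary heights `h : Fin 6 → ZMod 3`,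
an admissible central value `x` (no `i` with `h i = h (i+1) = x`) exists if and
only if the boundary is not, up to cyclic rotation, of the form `(a,a,b,b,c,c)`
with `a, b, c` pairwise distinct. -/
theorem hexagon_fillable_iff_not_staggered (h : Fin 6 → ZMod 3) :
    (∃ x : ZMod 3, ∀ i : Fin 6, ¬ (h i = h (i + 1) ∧ h i = x)) ↔
      ¬ (∃ (k : Fin 6) (a b c : ZMod 3), a ≠ b ∧ b ≠ c ∧ a ≠ c ∧
          ∀ i : Fin 6, h (i + k) = ![a, a, b, b, c, c] i) := by
  rw [hexRot_iff h]
  have hh : h = ![h 0, h 1, h 2, h 3, h 4, h 5] := by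
    funext i; fin_cases i <;> rfl
  rw [hh]
  exact hex_aux (h 0) (h 1) (h 2) (h 3) (h 4) (h 5)
end

section
/- In the cyclic ring setting with all plaquettes unflippable and b_{i−1} = a_i = c_i for all i: pick any i and set d_i in Z/3Z with d_i ≠ a_i and d_i ≠ a_{i+1}; define b' equal to b except b'_i = d_i. Then b' is admissible with respect to the outer values a, differs from b in exactly one position, and plaquette i+1 is flippable for changing b' toward c (i.e., none of the three unflippability conditions holds at i+1 for (a, b', c)). -/
/-- Deadlock-breaking move (Appendix A.4, Fig. 9b): in the all-unflippable
situation with `b (i-1) = a i = c i` for all `i`, pick any plaquette `i` and a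
value `d ≠ a i, a (i+1)`; replacing `b i` by `d` yields a configuration `b'`
which is admissible with respect to `a`, differs from `b` exactly at `i`, and
makes plaquette `i+1` flippable for changing `b'` toward `c` (none of the three
unflippability conditions holds at `i+1`). -/
theorem ring_deadlock_breaking (n : ℕ) (hn : 1 ≤ n)
    (a b c : ZMod (6 * n - 6) → ZMod 3)
    (hb : ∀ j, ¬ (b (j - 1) = a j ∧ a j = b j))
    (hc : ∀ j, ¬ (c (j - 1) = a j ∧ a j = c j))
    (hpat : ∀ j, b (j - 1) = a j ∧ a j = c j)
    (i : ZMod (6 * n - 6)) (d : ZMod 3) (hd1 : d ≠ a i) (hd2 : d ≠ a (i + 1))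
    (b' : ZMod (6 * n - 6) → ZMod 3) (hb' : b' = Function.update b i d) :
    (∀ j, ¬ (b' (j - 1) = a j ∧ a j = b' j)) ∧
    (b' i ≠ b i ∧ ∀ j, j ≠ i → b' j = b j) ∧
    ¬ (b' (i + 1) = c (i + 1) ∨
        (b' i = a (i + 1) ∧ a (i + 1) = c (i + 1)) ∨
        (c (i + 1) = a (i + 2) ∧ a (i + 2) = b' (i + 2))) := by
  subst hb'
  have hba : ∀ j, b j = a (j + 1) := by
    intro j
    have := (hpat (j + 1)).1
    simpa using this
  have hca : ∀ j, c j = a j := fun j => ((hpat j).2).symm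
  have haneq : ∀ j, a j ≠ a (j + 1) := by
    intro j h
    refine hc (j + 1) ⟨?_, ?_⟩
    · simp only [add_sub_cancel_right, hca]; exact h
    · rw [← hca (j + 1)]
  have hab : ∀ j, a j ≠ b j := fun j h => hb j ⟨(hpat j).1, h⟩
  have hne1 : i + 1 ≠ i := fun h => haneq i (by rw [h])
  refine ⟨?_, ⟨?_, ?_⟩, ?_⟩
  · rintro j ⟨h1, h2⟩
    by_cases hji : j = i
    · subst hji
      rw [Function.update_self] at h2
      exact hd1 h2.symm
    · rw [Function.update_of_ne hji] at h2
      exact hab j h2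
  · rw [Function.update_self, hba i]
    exact hd2
  · intro j hj
    exact Function.update_of_ne hj _ _
  · rintro (h | ⟨h1, h2⟩ | ⟨h1, h2⟩)
    · rw [Function.update_of_ne hne1, hba (i + 1), hca (i + 1)] at h
      exact haneq (i + 1) h.symm
    · rw [Function.update_self] at h1
      exact hd2 h1
    · rw [hca (i + 1)] at h1
      exact haneq (i + 1) (by rw [show i + 1 + 1 = i + 2 by ring]; exact h1)
end

section
/- Let a, b, c be cyclic sequences of length m ≥ 2 in Z/3Z with b, c admissible with respect to a (no triple (x_{i−1}, a_i, x_i) all equal for x ∈ {b,c}). Then there exists a finite sequence b = b^{(0)}, b^{(1)}, ..., b^{(N)} = c of admissible configurations such that consecutive ones differ in exactly one position, with N ≤ m + 1. -/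
namespace RingFlips

variable {m : ℕ}

def Adm (a x : ZMod m → ZMod 3) : Prop := ∀ i, ¬ (x (i - 1) = a i ∧ a i = x i)

def Goal (a b c : ZMod m → ZMod 3) (K : ℕ) : Prop :=
  ∃ N : ℕ, N ≤ K ∧ ∃ seq : Fin (N + 1) → (ZMod m → ZMod 3),
    seq 0 = b ∧ seq (Fin.last N) = c ∧
    (∀ k, Adm a (seq k)) ∧
    (∀ k : Fin N, ∃ j, seq k.castSucc j ≠ seq k.succ j ∧
      ∀ j', j' ≠ j → seq k.castSucc j' = seq k.succ j')

lemma goal_refl {a b : ZMod m → ZMod 3} (h : Adm a b) (K : ℕ) : Goal a b b K :=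
  ⟨0, Nat.zero_le _, fun _ => b, rfl, rfl, fun _ => h, fun k => k.elim0⟩

lemma goal_mono {a b c : ZMod m → ZMod 3} {K K' : ℕ} (h : Goal a b c K) (hK : K ≤ K') :
    Goal a b c K' := by
  obtain ⟨N, hN, rest⟩ := h
  exact ⟨N, le_trans hN hK, rest⟩

lemma goal_cons {a b b' c : ZMod m → ZMod 3} {K : ℕ} (hb : Adm a b) (j : ZMod m)
    (hne : b j ≠ b' j) (hag : ∀ j', j' ≠ j → b j' = b' j') (h : Goal a b' c K) :
    Goal a b c (K + 1) := by
  obtain ⟨N, hN, seq, h0, hl, hadm, hflip⟩ := h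
  refine ⟨N + 1, by omega, Fin.cases b seq, Fin.cases_zero .., ?_, ?_, ?_⟩
  · show Fin.cases (motive := fun _ => ZMod m → ZMod 3) b seq (Fin.last (N+1)) = c
    rw [← Fin.succ_last, Fin.cases_succ]; exact hl
  · intro k
    induction k using Fin.cases with
    | zero => simpa using hb
    | succ k => simpa using hadm k
  · intro k
    induction k using Fin.cases with
    | zero =>
      refine ⟨j, ?_, ?_⟩
      · show Fin.cases (motive := fun _ => ZMod m → ZMod 3) b seq (Fin.castSucc 0) j ≠
          Fin.cases (motive := fun _ => ZMod m → ZMod 3) b seq (Fin.succ 0) j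
        rw [Fin.castSucc_zero, Fin.cases_zero, Fin.cases_succ, h0]
        exact hne
      · intro j' hj'
        show Fin.cases (motive := fun _ => ZMod m → ZMod 3) b seq (Fin.castSucc 0) j' =
          Fin.cases (motive := fun _ => ZMod m → ZMod 3) b seq (Fin.succ 0) j'
        rw [Fin.castSucc_zero, Fin.cases_zero, Fin.cases_succ, h0]
        exact hag j' hj'
    | succ k =>
      obtain ⟨j, hj1, hj2⟩ := hflip k
      refine ⟨j, ?_, ?_⟩
      · show Fin.cases (motive := fun _ => ZMod m → ZMod 3) b seq (Fin.castSucc k.succ) j ≠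
          Fin.cases (motive := fun _ => ZMod m → ZMod 3) b seq (Fin.succ k.succ) j
        rw [← Fin.succ_castSucc, Fin.cases_succ, Fin.cases_succ]
        exact hj1
      · intro j' hj'
        show Fin.cases (motive := fun _ => ZMod m → ZMod 3) b seq (Fin.castSucc k.succ) j' =
          Fin.cases (motive := fun _ => ZMod m → ZMod 3) b seq (Fin.succ k.succ) j'
        rw [← Fin.succ_castSucc, Fin.cases_succ, Fin.cases_succ]
        exact hj2 j' hj'

lemma goal_symm {a b c : ZMod m → ZMod 3} {K : ℕ} (h : Goal a b c K) : Goal a c b K := by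
  obtain ⟨N, hN, seq, h0, hl, hadm, hflip⟩ := h
  refine ⟨N, hN, fun k => seq k.rev, ?_, ?_, fun k => hadm _, ?_⟩
  · show seq (Fin.rev 0) = c
    rw [Fin.rev_zero]; exact hl
  · show seq (Fin.rev (Fin.last N)) = b
    rw [Fin.rev_last]; exact h0
  · intro k
    obtain ⟨j, hj1, hj2⟩ := hflip k.rev
    refine ⟨j, ?_, ?_⟩
    · show seq k.castSucc.rev j ≠ seq k.succ.rev j
      rw [Fin.rev_castSucc, Fin.rev_succ]
      exact hj1.symm
    · intro j' hj'
      show seq k.castSucc.rev j' = seq k.succ.rev j'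
      rw [Fin.rev_castSucc, Fin.rev_succ]
      exact (hj2 j' hj').symm

section Core
variable (hm : 2 ≤ m)
include hm

lemma one_ne_zero' : (1 : ZMod m) ≠ 0 := by
  haveI : Fact (1 < m) := ⟨hm⟩
  exact one_ne_zero

lemma sub_one_ne (i : ZMod m) : i - 1 ≠ i := fun h =>
  one_ne_zero' hm (by rwa [sub_eq_self] at h)

lemma add_one_ne (i : ZMod m) : i + 1 ≠ i := fun h =>
  one_ne_zero' hm (by rwa [add_eq_left] at h)

/-- From unflippability of a differing site: local case A or case B. -/
lemma step1 {a b c : ZMod m → ZMod 3} (hb : Adm a b) {i : ZMod m} (hne : b i ≠ c i)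
    (hun : ¬ Adm a (Function.update b i (c i))) :
    (b (i - 1) = a i ∧ a i = c i) ∨ (c i = a (i + 1) ∧ a (i + 1) = b (i + 1)) := by
  simp only [Adm, not_forall, not_not] at hun
  obtain ⟨j, hj1, hj2⟩ := hun
  by_cases hji : j = i
  · subst hji
    left
    rw [Function.update_of_ne (sub_one_ne hm j)] at hj1
    rw [Function.update_self] at hj2
    exact ⟨hj1, hj2⟩
  · by_cases hji' : j = i + 1
    · subst hji'
      right
      rw [show i + 1 - 1 = i by ring, Function.update_self] at hj1
      rw [Function.update_of_ne (by simpa using add_one_ne hm i)] at hj2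
      exact ⟨hj1, hj2⟩
    · exfalso
      have h1 : j - 1 ≠ i := fun h => hji' (by rw [← h]; ring)
      rw [Function.update_of_ne h1] at hj1
      rw [Function.update_of_ne hji] at hj2
      exact hb j ⟨hj1, hj2⟩

/-- Rigidity: in a complete deadlock, the configuration is one of two rigid scenarios. -/
lemma rigidity {a b c : ZMod m → ZMod 3} (hb : Adm a b) (hc : Adm a c) (hne : b ≠ c)
    (hdead : ∀ i, b i ≠ c i → ¬ Adm a (Function.update b i (c i))) :
    (∀ i, a i = b i ∧ c (i - 1) = a i) ∨ (∀ i, a i = c i ∧ b (i - 1) = a i) := by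
  haveI : NeZero m := ⟨by omega⟩
  set PA : ZMod m → Prop := fun i => b (i - 1) = a i ∧ a i = c i with hPA
  set PB : ZMod m → Prop := fun i => c i = a (i + 1) ∧ a (i + 1) = b (i + 1) with hPB
  have hstep : ∀ i, b i ≠ c i → PA i ∨ PB i := fun i h => step1 hm hb h (hdead i h)
  have hpropA : ∀ i, PA i → PA (i - 1) := by
    intro i ⟨h1, h2⟩
    have hca : c (i - 1) ≠ a i := fun h => hc i ⟨h, h2⟩
    have hd : b (i - 1) ≠ c (i - 1) := by rw [h1]; exact fun h => hca h.symm
    rcases hstep _ hd with h | h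
    · exact h
    · exact absurd (by simpa using h.1) hca
  have hpropB : ∀ i, PB i → PB (i + 1) := by
    intro i ⟨h1, h2⟩
    have hcb : a (i + 1) ≠ c (i + 1) := fun h => hc (i + 1) ⟨by simpa using h1, h⟩
    have hd : b (i + 1) ≠ c (i + 1) := fun h => hcb (h2.trans h)
    rcases hstep _ hd with h | h
    · exact absurd h.2 hcb
    · exact h
  obtain ⟨i₀, hi₀⟩ := Function.ne_iff.mp hne
  have hall : ∀ j : ZMod m, (PA i₀ → PA j) ∧ (PB i₀ → PB j) := by
    intro j
    have key : ∀ k : ℕ, (PA i₀ → PA (i₀ - k)) ∧ (PB i₀ → PB (i₀ + k)) := by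
      intro k
      induction k with
      | zero => simp
      | succ n ih =>
        constructor
        · intro h
          have := hpropA _ (ih.1 h)
          have e : i₀ - (n : ZMod m) - 1 = i₀ - ((n : ℕ) + 1 : ℕ) := by push_cast; ring
          rwa [e] at this
        · intro h
          have := hpropB _ (ih.2 h)
          have e : i₀ + (n : ZMod m) + 1 = i₀ + ((n : ℕ) + 1 : ℕ) := by push_cast; ring
          rwa [e] at this
    constructor
    · intro h
      have := (key (i₀ - j).val).1 h
      rwa [ZMod.natCast_val, ZMod.cast_id, sub_sub_cancel] at this
    · intro h
      have := (key (j - i₀).val).2 h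
      rwa [ZMod.natCast_val, ZMod.cast_id, add_sub_cancel] at this
  rcases hstep i₀ hi₀ with h | h
  · right
    intro i
    obtain ⟨h1, h2⟩ := (hall i).1 h
    exact ⟨h2, h1⟩
  · left
    intro i
    obtain ⟨h1, h2⟩ := (hall (i - 1)).2 h
    rw [sub_add_cancel] at h1 h2
    exact ⟨h2, h1⟩

omit hm in
/-- In a rigid scenario, the two configurations differ everywhere. -/
lemma scenario_ne {a b c : ZMod m → ZMod 3} (hb : Adm a b)
    (h : ∀ i, a i = b i ∧ c (i - 1) = a i) : ∀ i, b i ≠ c i := by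
  intro i
  have hadj : ∀ j : ZMod m, a (j - 1) ≠ a j := by
    intro j h'
    exact hb j ⟨(h (j-1)).1.symm.trans h', (h j).1⟩
  have hci : c i = a (i + 1) := by
    have := (h (i + 1)).2
    rwa [add_sub_cancel_right] at this
  rw [← (h i).1, hci]
  have := hadj (i + 1)
  rwa [add_sub_cancel_right] at this

/-- If not everything differs, some differing site is flippable. -/
lemma exists_flip {a b c : ZMod m → ZMod 3} (hb : Adm a b) (hc : Adm a c)
    (hne : b ≠ c) (hex : ∃ i, b i = c i) :
    ∃ i, b i ≠ c i ∧ Adm a (Function.update b i (c i)) := by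
  by_contra h
  push_neg at h
  obtain ⟨i₀, hi₀⟩ := hex
  rcases rigidity hm hb hc hne h with hs | hs
  · exact scenario_ne hb hs i₀ hi₀
  · exact scenario_ne hc hs i₀ hi₀.symm

/-- Greedy flipping: when some site already agrees, `b` can be driven to `c`
within the number of disagreeing sites. -/
lemma greedy [NeZero m] {a c : ZMod m → ZMod 3} (hc : Adm a c) :
    ∀ n (b : ZMod m → ZMod 3), Adm a b →
      (Finset.univ.filter fun i => b i ≠ c i).card ≤ n → (∃ i, b i = c i) →
      Goal a b c n := by
  intro n
  induction n with
  | zero =>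
    intro b hb hcard _
    have hempty : (Finset.univ.filter fun i => b i ≠ c i) = ∅ :=
      Finset.card_eq_zero.mp (Nat.le_zero.mp hcard)
    have : b = c := by
      funext i
      by_contra hne
      have : i ∈ (Finset.univ.filter fun i => b i ≠ c i) :=
        Finset.mem_filter.mpr ⟨Finset.mem_univ i, hne⟩
      simp [hempty] at this
    rw [this]
    exact goal_refl hc 0
  | succ n ih =>
    intro b hb hcard hex
    by_cases hbc : b = c
    · rw [hbc]; exact goal_refl hc _
    obtain ⟨i, hnei, hadm'⟩ := exists_flip hm hb hc hbc hex
    set b' := Function.update b i (c i) with hb'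
    have hmem : i ∈ (Finset.univ.filter fun j => b j ≠ c j) :=
      Finset.mem_filter.mpr ⟨Finset.mem_univ i, hnei⟩
    have hfe : (Finset.univ.filter fun j => b' j ≠ c j) =
        (Finset.univ.filter fun j => b j ≠ c j).erase i := by
      ext j
      simp only [Finset.mem_filter, Finset.mem_erase, Finset.mem_univ, true_and]
      constructor
      · intro hj
        have hji : j ≠ i := by
          intro h; subst h
          exact hj (by rw [hb', Function.update_self])
        rw [hb', Function.update_of_ne hji] at hj
        exact ⟨hji, hj⟩
      · intro ⟨hji, hj⟩
        rwa [hb', Function.update_of_ne hji]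
    have hcard' : (Finset.univ.filter fun j => b' j ≠ c j).card ≤ n := by
      rw [hfe, Finset.card_erase_of_mem hmem]
      omega
    have hgoal' : Goal a b' c n :=
      ih b' hadm' hcard' ⟨i, by rw [hb', Function.update_self]⟩
    exact goal_cons hb i
      (by rw [hb', Function.update_self]; exact hnei)
      (fun j' hj' => by rw [hb', Function.update_of_ne hj'])
      hgoal'

/-- The deadlock scenario `b = a`, `c = shift of a`: two extra moves suffice. -/
lemma scenarioB {a b c : ZMod m → ZMod 3} (hb : Adm a b) (hc : Adm a c)
    (hB : ∀ i, a i = b i ∧ c (i - 1) = a i) : Goal a b c (m + 1) := by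
  haveI : NeZero m := ⟨by omega⟩
  have hbi : ∀ i, b i = a i := fun i => (hB i).1.symm
  have hadj : ∀ j : ZMod m, a (j - 1) ≠ a j := by
    intro j h'
    exact hb j ⟨(hbi (j-1)).trans h', (hB j).1⟩
  have hcs : ∀ i, c i = a (i + 1) := by
    intro i
    have := (hB (i + 1)).2
    rwa [add_sub_cancel_right] at this
  have ha01 : a 0 ≠ a 1 := by
    have := hadj 1
    rwa [sub_self] at this
  have hthird : ∀ x y : ZMod 3, x ≠ y → (-x - y ≠ x ∧ -x - y ≠ y) := by decide
  set t : ZMod 3 := -(a 0) - a 1 with ht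
  have ht0 : t ≠ a 0 := (hthird _ _ ha01).1
  have ht1 : t ≠ a 1 := (hthird _ _ ha01).2
  have h10 : (1 : ZMod m) ≠ 0 := one_ne_zero' hm
  have hm10 : (-1 : ZMod m) ≠ 0 := fun h => h10 (neg_eq_zero.mp h)
  have h0m1 : (0 : ZMod m) ≠ -1 := fun h => hm10 h.symm
  set b1 := Function.update b 0 t with hb1
  have hb1adm : Adm a b1 := by
    intro i
    by_cases hi0 : i = 0
    · subst hi0
      intro ⟨_, h2⟩
      rw [hb1, Function.update_self] at h2
      exact ht0 h2.symm
    by_cases hi1 : i = 1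
    · subst hi1
      intro ⟨h1, _⟩
      rw [sub_self, hb1, Function.update_self] at h1
      exact ht1 h1
    · have hsub : i - 1 ≠ 0 := fun h => hi1 (by rw [sub_eq_zero] at h; exact h)
      intro ⟨h1, h2⟩
      rw [hb1, Function.update_of_ne hsub] at h1
      rw [hb1, Function.update_of_ne hi0] at h2
      exact hb i ⟨h1, h2⟩
  have hcm1 : c (-1) = a 0 := by
    have := (hB 0).2
    rwa [zero_sub] at this
  set b2 := Function.update b1 (-1 : ZMod m) (c (-1)) with hb2
  have hb2adm : Adm a b2 := by
    intro i
    by_cases him : i = -1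
    · subst him
      intro ⟨_, h2⟩
      rw [hb2, Function.update_self, hcm1] at h2
      have := hadj 0
      rw [zero_sub] at this
      exact this h2
    by_cases hi0 : i = 0
    · subst hi0
      intro ⟨_, h2⟩
      rw [hb2, Function.update_of_ne h0m1, hb1, Function.update_self] at h2
      exact ht0 h2.symm
    by_cases hi1 : i = 1
    · subst hi1
      intro ⟨h1, _⟩
      rw [sub_self, hb2, Function.update_of_ne h0m1, hb1, Function.update_self] at h1
      exact ht1 h1
    · have hsub0 : i - 1 ≠ 0 := fun h => hi1 (by rw [sub_eq_zero] at h; exact h)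
      have hsubm : i - 1 ≠ -1 := by
        intro h
        rw [sub_eq_iff_eq_add] at h
        exact hi0 (by rw [h]; ring)
      intro ⟨h1, h2⟩
      rw [hb2, Function.update_of_ne hsubm, hb1, Function.update_of_ne hsub0] at h1
      rw [hb2, Function.update_of_ne him, hb1, Function.update_of_ne hi0] at h2
      exact hb i ⟨h1, h2⟩
  -- from b2 on, run the greedy procedure
  have hsubset : (Finset.univ.filter fun j => b2 j ≠ c j) ⊆ Finset.univ.erase (-1 : ZMod m) := by
    intro j hj
    rw [Finset.mem_filter] at hj
    refine Finset.mem_erase.mpr ⟨?_, Finset.mem_univ j⟩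
    intro h
    subst h
    exact hj.2 (by rw [hb2, Function.update_self])
  have hcard2 : (Finset.univ.filter fun j => b2 j ≠ c j).card ≤ m - 1 := by
    have := Finset.card_le_card hsubset
    rwa [Finset.card_erase_of_mem (Finset.mem_univ _), Finset.card_univ, ZMod.card] at this
  have hgoal2 : Goal a b2 c (m - 1) :=
    greedy hm hc (m - 1) b2 hb2adm hcard2 ⟨-1, by rw [hb2, Function.update_self]⟩
  have hgoal1 : Goal a b1 c (m - 1 + 1) := by
    refine goal_cons hb1adm (-1) ?_ ?_ hgoal2
    · rw [hb2, Function.update_self, hcm1, hb1, Function.update_of_ne hm10, hbi]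
      have := hadj 0
      rwa [zero_sub] at this
    · intro j' hj'
      rw [hb2, Function.update_of_ne hj']
  have hgoal0 : Goal a b c (m - 1 + 1 + 1) := by
    refine goal_cons hb 0 ?_ ?_ hgoal1
    · rw [hb1, Function.update_self, hbi]
      exact fun h => ht0 h.symm
    · intro j' hj'
      rw [hb1, Function.update_of_ne hj']
  have : m - 1 + 1 + 1 = m + 1 := by omega
  rwa [this] at hgoal0

/-- Main connectivity lemma. -/
lemma main {a b c : ZMod m → ZMod 3} (hb : Adm a b) (hc : Adm a c) :
    Goal a b c (m + 1) := by
  haveI : NeZero m := ⟨by omega⟩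
  have hcardle : ∀ x : ZMod m → ZMod 3,
      (Finset.univ.filter fun i => x i ≠ c i).card ≤ m := fun x => by
    calc (Finset.univ.filter fun i => x i ≠ c i).card
        ≤ Finset.univ.card := Finset.card_filter_le _ _
      _ = m := by rw [Finset.card_univ, ZMod.card]
  by_cases hex : ∃ i, b i = c i
  · exact goal_mono (greedy hm hc m b hb (hcardle b) hex) (by omega)
  · push_neg at hex
    by_cases hfl : ∃ i, Adm a (Function.update b i (c i))
    · obtain ⟨i, hadm'⟩ := hfl
      have hgoal' : Goal a (Function.update b i (c i)) c m :=
        greedy hm hc m _ hadm' (hcardle _) ⟨i, Function.update_self ..⟩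
      exact goal_cons hb i
        (by rw [Function.update_self]; exact hex i)
        (fun j' hj' => by rw [Function.update_of_ne hj'])
        hgoal'
    · push_neg at hfl
      have hne : b ≠ c := fun h => hex 0 (congrFun h 0)
      rcases rigidity hm hb hc hne (fun i _ => hfl i) with hs | hs
      · exact scenarioB hm hb hc hs
      · exact goal_symm (scenarioB hm hc hb hs)

end Core
end RingFlips


/-- Connectivity of a single cyclic ring (Appendix A.4): for cyclic sequences
`a, b, c` of length `m ≥ 2` in `ZMod 3` with `b` and `c` admissible with
respect to `a` (no triple `(x (i-1), a i, x i)` all equal), there is a sequence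
of at most `m + 1` single-plaquette flips through admissible configurations
transforming `b` into `c`, consecutive configurations differing in exactly one
position. -/
theorem ring_connected_by_single_flips (m : ℕ) (hm : 2 ≤ m)
    (a b c : ZMod m → ZMod 3)
    (hb : ∀ i, ¬ (b (i - 1) = a i ∧ a i = b i))
    (hc : ∀ i, ¬ (c (i - 1) = a i ∧ a i = c i)) :
    ∃ N : ℕ, N ≤ m + 1 ∧ ∃ seq : Fin (N + 1) → (ZMod m → ZMod 3),
      seq 0 = b ∧ seq (Fin.last N) = c ∧
      (∀ k, ∀ i, ¬ (seq k (i - 1) = a i ∧ a i = seq k i)) ∧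
      (∀ k : Fin N, ∃ j, seq k.castSucc j ≠ seq k.succ j ∧
        ∀ j', j' ≠ j → seq k.castSucc j' = seq k.succ j') := by
  exact RingFlips.main hm hb hc
end
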